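/- arXiv:2401.17578 — 4 statements merged into one kernel-verified Lean document; each statement's English description precedes it below -/
import Mathlib

section
/- Suppose ρ on ℝⁿ has a linear differentiation representation (β, Σ, G) in which at least 3 coordinates of β are nonzero. Then there exist x, y, w, z ∈ ℝⁿ such that x >_D y, ¬(w >_D z), and ρ(x,y) < ρ(w,z). -/
open Finset

/-- Dominance x >_D y with respect to attribute weights β. -/
def DomB {n : ℕ} (β x y : Fin n → ℝ) : Prop :=
  (∀ k, β k * y k ≤ β k * x k) ∧ ∃ k, β k * y k < β k * x k

/-- Linear differentiation representation (β, Σ, G). -/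
def IsLDMRep {n : ℕ} (ρ : (Fin n → ℝ) → (Fin n → ℝ) → ℝ) (β : Fin n → ℝ)
    (S : Matrix (Fin n) (Fin n) ℝ) (G : ℝ → ℝ) : Prop :=
  S.PosDef ∧ Continuous G ∧ StrictMono G ∧
  ∀ x y : Fin n → ℝ, x ≠ y →
    ρ x y = G ((∑ k, β k * (x k - y k)) /
      Real.sqrt (∑ i, ∑ j, (x i - y i) * S i j * (x j - y j)))

/-!
Pick attributes `i, j, k` with nonzero weights and let `a`, `b` be the differences that raise
`β`-utility by one through attribute `i`, resp. `j` alone, labelled so that `Q b ≤ Q a` for the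
quadratic form `Q d = dᵀ Σ d`. The parallelogram law gives `Q (a + b) < 2 Q a + 2 Q b ≤ 4 Q a`,
so the index `βᵀd / √(Q d)` of `a + b` exceeds that of `a`. The index is continuous away from
`0`, so lowering attribute `k` by a small amount keeps it above the index of `a`; the perturbed
difference no longer dominates `0`, whereas `a` does.
-/

open Matrix Filter Topology

variable {ι : Type*} [Fintype ι]

lemma sum_sum_mul_mul_eq_dotProduct_mulVec (S : Matrix ι ι ℝ) (d : ι → ℝ) :
    ∑ i, ∑ j, d i * S i j * d j = d ⬝ᵥ S *ᵥ d := by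
  simp only [dotProduct, mulVec, Finset.mul_sum, mul_assoc]

lemma dotProduct_mulVec_add_add_sub (S : Matrix ι ι ℝ) (a b : ι → ℝ) :
    (a + b) ⬝ᵥ S *ᵥ (a + b) + (a - b) ⬝ᵥ S *ᵥ (a - b) =
      2 * (a ⬝ᵥ S *ᵥ a) + 2 * (b ⬝ᵥ S *ᵥ b) := by
  simp only [mulVec_add, mulVec_sub, add_dotProduct, sub_dotProduct, dotProduct_add,
    dotProduct_sub]
  ring

lemma Matrix.PosDef.dotProduct_mulVec_pos_real {S : Matrix ι ι ℝ} (hS : S.PosDef) {d : ι → ℝ}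
    (hd : d ≠ 0) : 0 < d ⬝ᵥ S *ᵥ d := by
  simpa only [star_trivial] using hS.dotProduct_mulVec_pos hd

lemma Matrix.PosDef.dotProduct_mulVec_add_lt {S : Matrix ι ι ℝ} (hS : S.PosDef) {a b : ι → ℝ}
    (hab : a ≠ b) :
    (a + b) ⬝ᵥ S *ᵥ (a + b) < 2 * (a ⬝ᵥ S *ᵥ a) + 2 * (b ⬝ᵥ S *ᵥ b) := by
  have := hS.dotProduct_mulVec_pos_real (sub_ne_zero.mpr hab)
  linarith [dotProduct_mulVec_add_add_sub S a b]

/-- The argument of `G` in a linear differentiation representation, evaluated at `x - y = d`. -/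
noncomputable def ldmIndex (β : ι → ℝ) (S : Matrix ι ι ℝ) (d : ι → ℝ) : ℝ :=
  (β ⬝ᵥ d) / √(d ⬝ᵥ S *ᵥ d)

lemma continuousAt_ldmIndex (β : ι → ℝ) {S : Matrix ι ι ℝ} (hS : S.PosDef) {d : ι → ℝ}
    (hd : d ≠ 0) : ContinuousAt (ldmIndex β S) d :=
  ContinuousAt.div (by fun_prop) (by fun_prop)
    (Real.sqrt_pos.mpr (hS.dotProduct_mulVec_pos_real hd)).ne'

lemma ldmIndex_lt_ldmIndex_add (β : ι → ℝ) {S : Matrix ι ι ℝ} (hS : S.PosDef) {a b : ι → ℝ}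
    (hab : a ≠ b) (hβ : β ⬝ᵥ b = β ⬝ᵥ a) (hβa : 0 < β ⬝ᵥ a)
    (hQ : b ⬝ᵥ S *ᵥ b ≤ a ⬝ᵥ S *ᵥ a) :
    ldmIndex β S a < ldmIndex β S (a + b) := by
  have hQa := hS.dotProduct_mulVec_pos_real (d := a) (by rintro rfl; simp at hβa)
  have hQab := hS.dotProduct_mulVec_pos_real (d := a + b)
    fun h ↦ by linarith [show β ⬝ᵥ (a + b) = 0 by rw [h, dotProduct_zero], dotProduct_add β a b]
  have hsqrt : √((a + b) ⬝ᵥ S *ᵥ (a + b)) < 2 * √(a ⬝ᵥ S *ᵥ a) := by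
    rw [← Real.sqrt_sq zero_le_two, ← Real.sqrt_mul (by norm_num)]
    refine Real.sqrt_lt_sqrt hQab.le ?_
    linarith [hS.dotProduct_mulVec_add_lt hab]
  simp only [ldmIndex, dotProduct_add, hβ]
  rw [div_lt_div_iff₀ (Real.sqrt_pos.mpr hQa) (Real.sqrt_pos.mpr hQab)]
  linarith [mul_lt_mul_of_pos_left hsqrt hβa]

variable {n : ℕ} {β : Fin n → ℝ}

lemma not_domB_of_mul_lt {x y : Fin n → ℝ} {k : Fin n} (hk : β k * x k < β k * y k) :
    ¬ DomB β x y :=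
  fun h ↦ (h.1 k).not_gt hk

lemma domB_single_zero {i : Fin n} {c : ℝ} (h : 0 < β i * c) : DomB β (Pi.single i c) 0 := by
  refine ⟨fun k ↦ ?_, i, by simpa using h⟩
  rcases eq_or_ne k i with rfl | hk
  · simpa using h.le
  · simp [hk]

variable {ρ : (Fin n → ℝ) → (Fin n → ℝ) → ℝ} {S : Matrix (Fin n) (Fin n) ℝ} {G : ℝ → ℝ}

lemma IsLDMRep.apply_zero_right (hrep : IsLDMRep ρ β S G) {d : Fin n → ℝ} (hd : d ≠ 0) :
    ρ d 0 = G (ldmIndex β S d) := by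
  simp only [hrep.2.2.2 d 0 hd, Pi.zero_apply, sub_zero, sum_sum_mul_mul_eq_dotProduct_mulVec]
  rfl

lemma IsLDMRep.exists_domB_lt_not_domB (hrep : IsLDMRep ρ β S G) {i j k : Fin n}
    (hij : i ≠ j) (hik : i ≠ k) (hjk : j ≠ k) (hi : β i ≠ 0) (hj : β j ≠ 0) (hk : β k ≠ 0)
    (hQ : Pi.single j (β j)⁻¹ ⬝ᵥ S *ᵥ Pi.single j (β j)⁻¹ ≤
      Pi.single i (β i)⁻¹ ⬝ᵥ S *ᵥ Pi.single i (β i)⁻¹) :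
    ∃ x y w z : Fin n → ℝ, DomB β x y ∧ ¬ DomB β w z ∧ ρ x y < ρ w z := by
  set a : Fin n → ℝ := Pi.single i (β i)⁻¹
  set b : Fin n → ℝ := Pi.single j (β j)⁻¹
  set u : Fin n → ℝ := Pi.single k (β k)⁻¹
  have hβa : β ⬝ᵥ a = 1 := by simp [a, dotProduct_single, hi]
  have hβb : β ⬝ᵥ b = 1 := by simp [b, dotProduct_single, hj]
  have hab : a ≠ b := fun h ↦ by simpa [a, b, hij, hi] using congrFun h i
  have hab0 : a + b ≠ 0 := fun h ↦ by
    have := dotProduct_add β a b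
    simp only [h, dotProduct_zero, hβa, hβb] at this
    norm_num at this
  have hlt : ldmIndex β S a < ldmIndex β S (a + b) :=
    ldmIndex_lt_ldmIndex_add β hrep.1 hab (hβb.trans hβa.symm) (by simp [hβa]) hQ
  have hnear : ∀ᶠ ε in 𝓝[>] (0 : ℝ), ldmIndex β S a < ldmIndex β S (a + b - ε • u) := by
    have hw : Tendsto (fun ε : ℝ ↦ a + b - ε • u) (𝓝 0) (𝓝 (a + b)) := by
      simpa using (tendsto_const_nhds (x := a + b)).sub
        ((tendsto_id (x := 𝓝 (0 : ℝ))).smul_const u)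
    exact nhdsWithin_le_nhds
      (((continuousAt_ldmIndex β hrep.1 hab0).tendsto.comp hw).eventually_const_lt hlt)
  obtain ⟨ε, hε, hεpos⟩ := (hnear.and self_mem_nhdsWithin).exists
  have hwk : β k * (a + b - ε • u) k = -ε := by
    simp only [a, b, u, Pi.sub_apply, Pi.add_apply, Pi.smul_apply, Pi.single_eq_same,
      Pi.single_eq_of_ne hik.symm, Pi.single_eq_of_ne hjk.symm, add_zero, zero_sub, smul_eq_mul,
      mul_neg, neg_inj]
    field_simp
  have hw0 : a + b - ε • u ≠ 0 := fun h ↦ by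
    simp only [h, Pi.zero_apply, mul_zero] at hwk
    linarith
  refine ⟨a, 0, a + b - ε • u, 0, domB_single_zero (by simp [hi]),
    not_domB_of_mul_lt (k := k) (by simp only [hwk, Pi.zero_apply, mul_zero]; linarith), ?_⟩
  rw [hrep.apply_zero_right (by simpa [a] using hi), hrep.apply_zero_right hw0]
  exact hrep.2.2.1 hε

theorem stmt_12_general {n : ℕ} (ρ : (Fin n → ℝ) → (Fin n → ℝ) → ℝ)
    (β : Fin n → ℝ) (S : Matrix (Fin n) (Fin n) ℝ) (G : ℝ → ℝ)
    (hrep : IsLDMRep ρ β S G)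
    (hβ : 3 ≤ (Finset.univ.filter (fun k => β k ≠ 0)).card) :
    ∃ x y w z : Fin n → ℝ, DomB β x y ∧ ¬ DomB β w z ∧ ρ x y < ρ w z := by
  obtain ⟨t, hts, htcard⟩ := Finset.exists_subset_card_eq hβ
  obtain ⟨a, b, c, hab, hac, hbc, rfl⟩ := Finset.card_eq_three.mp htcard
  have hβ' : ∀ m ∈ ({a, b, c} : Finset (Fin n)), β m ≠ 0 := fun m hm ↦ (mem_filter.mp (hts hm)).2
  rcases le_total (Pi.single b (β b)⁻¹ ⬝ᵥ S *ᵥ Pi.single b (β b)⁻¹)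
      (Pi.single a (β a)⁻¹ ⬝ᵥ S *ᵥ Pi.single a (β a)⁻¹) with h | h
  · exact hrep.exists_domB_lt_not_domB hab hac hbc (hβ' a (by simp)) (hβ' b (by simp))
      (hβ' c (by simp)) h
  · exact hrep.exists_domB_lt_not_domB hab.symm hbc hac (hβ' b (by simp)) (hβ' a (by simp))
      (hβ' c (by simp)) h

/-- Proposition 11 (first part) — any linear differentiation model
with at least 3 nonzero attribute weights violates dominance. -/
theorem stmt_12 {n : ℕ} (ρ : (Fin n → ℝ) → (Fin n → ℝ) → ℝ)
    (hrange : ∀ x y, ρ x y ∈ Set.Icc (0:ℝ) 1)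
    (hsymm : ∀ x y, ρ x y = 1 - ρ y x)
    (β : Fin n → ℝ) (S : Matrix (Fin n) (Fin n) ℝ) (G : ℝ → ℝ)
    (hrep : IsLDMRep ρ β S G)
    (hβ : 3 ≤ (Finset.univ.filter (fun k => β k ≠ 0)).card) :
    ∃ x y w z : Fin n → ℝ, DomB β x y ∧ ¬ DomB β w z ∧ ρ x y < ρ w z :=
  stmt_12_general ρ β S G hrep hβ
end

section
/- Fix c ∈ ℝ and Δq > 0, and for i ≠ j in {a,b} define profits Π_i(p_i, p_j) = (p_i − c)·G( (p_j − p_i) / (Δq + |p_j − p_i|) ). (1) If G is linear, G(r) = 1/2 + r/2, then the pricing game has a unique pure-strategy Nash equilibrium, and in it p_a = p_b = c + Δq. (2) More generally, if G : [−1,1] → [0,1] is strictly increasing with G(r) = 1 − G(−r) and is differentiable at 0 with G'(0) > 0, then any symmetric pure-strategy Nash equilibrium (p_a = p_b) satisfies p_a = p_b = c + Δq/(2·G'(0)); in particular, if a symmetric pure-strategy equilibrium exists it is unique. -/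
/-- Profit of a firm pricing at p against a competitor pricing at q, with marginal
cost c, quantity dissimilarity dq, and comparability transformation G. -/
noncomputable def profit (G : ℝ → ℝ) (c dq p q : ℝ) : ℝ :=
  (p - c) * G ((q - p) / (dq + |q - p|))

/-- Pure-strategy Nash equilibrium of the symmetric pricing game. -/
def IsNE (G : ℝ → ℝ) (c dq pa pb : ℝ) : Prop :=
  (∀ p, profit G c dq p pb ≤ profit G c dq pa pb) ∧
  (∀ p, profit G c dq p pa ≤ profit G c dq pb pa)

/-!
With linear `G`, against a rival price `q < c + Δq` the profit stays strictly below `Δq / 2` at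
every price but tends to `Δq / 2` as the own price grows, so there is no best response. Against
`q > c + Δq`, the profit outside `(c + Δq, q)` is at most `(q - c) / 2`, which slightly undercutting
`q` beats, so every best response lies in that interval. In an equilibrium both prices are therefore
at least `c + Δq`, and one price above `c + Δq` would put the other strictly below it and vice versa.

For general `G`, at a symmetric equilibrium `t ↦ Π(t, p)` has a maximum at `t = p`, where it is
differentiable because `s ↦ s / (Δq + |s|)` has derivative `1 / Δq` at `0`; the first-order condition
`G 0 = (p - c) G'(0) / Δq` with `G 0 = 1 / 2` gives the price.
-/

open Filter Topology

def IsBestResponse (G : ℝ → ℝ) (c dq p q : ℝ) : Prop :=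
  ∀ p', profit G c dq p' q ≤ profit G c dq p q

section Linear

local notation "Glin" => fun r : ℝ => 1 / 2 + r / 2

variable {c dq p q : ℝ}

lemma profit_linear_of_le (hdq : 0 < dq) (h : q ≤ p) :
    profit Glin c dq p q = (p - c) * dq / (2 * (dq + (p - q))) := by
  have hD : dq + (p - q) ≠ 0 := by linarith
  rw [profit, abs_sub_comm, abs_of_nonneg (sub_nonneg.2 h)]
  field_simp
  ring

lemma profit_linear_of_ge (hdq : 0 < dq) (h : p ≤ q) :
    profit Glin c dq p q = (p - c) * (dq + 2 * (q - p)) / (2 * (dq + (q - p))) := by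
  have hD : dq + (q - p) ≠ 0 := by linarith
  rw [profit, abs_of_nonneg (sub_nonneg.2 h)]
  field_simp
  ring

lemma isBestResponse_linear_self (hdq : 0 < dq) :
    IsBestResponse Glin c dq (c + dq) (c + dq) := by
  intro p
  rw [profit_linear_of_le hdq le_rfl]
  rcases le_total p (c + dq) with h | h
  · rw [profit_linear_of_ge hdq h, div_le_div_iff₀ (by linarith) (by linarith)]
    nlinarith [mul_nonneg hdq.le (sq_nonneg (dq - (p - c)))]
  · rw [profit_linear_of_le hdq h, div_le_div_iff₀ (by linarith) (by linarith)]
    nlinarith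

lemma profit_linear_lt_half (hdq : 0 < dq) (hq : q < c + dq) (p : ℝ) :
    profit Glin c dq p q < dq / 2 := by
  rcases le_total p q with h | h
  · rw [profit_linear_of_ge hdq h, div_lt_div_iff₀ (by linarith) (by norm_num)]
    nlinarith [mul_nonneg (sub_nonneg.2 h) (sub_nonneg.2 hq.le), sq_nonneg (q - p),
      mul_pos hdq (sub_pos.2 hq)]
  · rw [profit_linear_of_le hdq h, div_lt_div_iff₀ (by linarith) (by norm_num)]
    nlinarith [mul_pos hdq (sub_pos.2 hq)]

lemma tendsto_profit_linear_atTop (hdq : 0 < dq) (q : ℝ) :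
    Tendsto (fun p => profit Glin c dq p q) atTop (𝓝 (dq / 2)) := by
  have hshift : Tendsto (fun p => 2 * (dq + (p - q))) atTop atTop :=
    (tendsto_atTop_add_const_left _ _
      (tendsto_atTop_add_const_right _ _ tendsto_id)).const_mul_atTop two_pos
  have hlim : Tendsto (fun p => dq / 2 - dq * (dq + c - q) / (2 * (dq + (p - q)))) atTop
      (𝓝 (dq / 2)) := by
    simpa using tendsto_const_nhds.sub (tendsto_const_nhds.div_atTop hshift)
  refine hlim.congr' ?_
  filter_upwards [eventually_ge_atTop q] with p hp
  have hD : dq + (p - q) ≠ 0 := by linarith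
  rw [profit_linear_of_le hdq hp]
  field_simp
  ring

lemma not_isBestResponse_linear_of_lt (hdq : 0 < dq) (hq : q < c + dq) (p : ℝ) :
    ¬ IsBestResponse Glin c dq p q := by
  intro hBR
  obtain ⟨p', hp'⟩ := ((tendsto_order.1 (tendsto_profit_linear_atTop (c := c) hdq q)).1 _
    (profit_linear_lt_half hdq hq p)).exists
  exact (hBR p').not_gt hp'

lemma profit_linear_le_half_sub (hdq : 0 < dq) (hq : c + dq ≤ q) (hp : p ≤ c + dq ∨ q ≤ p) :
    profit Glin c dq p q ≤ (q - c) / 2 := by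
  rcases hp with hp | hp
  · rw [profit_linear_of_ge hdq (by linarith), div_le_div_iff₀ (by linarith) (by norm_num)]
    nlinarith [mul_nonneg (sub_nonneg.2 (hp.trans hq)) (by linarith : 0 ≤ dq + q - 2 * p + c)]
  · rw [profit_linear_of_le hdq hp, div_le_div_iff₀ (by linarith) (by norm_num)]
    nlinarith [mul_nonneg (sub_nonneg.2 hp) (sub_nonneg.2 hq)]

lemma half_sub_lt_profit_linear (hdq : 0 < dq) (hq : c + dq < q) :
    (q - c) / 2 < profit Glin c dq (q - (q - c - dq) / 4) q := by
  have he : 0 < (q - c - dq) / 4 := by linarith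
  rw [profit_linear_of_ge hdq (by linarith), div_lt_div_iff₀ (by norm_num) (by linarith)]
  nlinarith [mul_pos he he]

lemma IsBestResponse.linear_mem_Ioo (hdq : 0 < dq) (hq : c + dq < q)
    (hBR : IsBestResponse Glin c dq p q) : p ∈ Set.Ioo (c + dq) q := by
  by_contra hp
  rw [Set.mem_Ioo, not_and_or, not_lt, not_lt] at hp
  exact (profit_linear_le_half_sub hdq hq.le hp).not_gt
    ((half_sub_lt_profit_linear hdq hq).trans_le (hBR _))

lemma IsBestResponse.linear_eq (hdq : 0 < dq) (hpq : IsBestResponse Glin c dq p q)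
    (hqp : IsBestResponse Glin c dq q p) : q = c + dq := by
  have hq : c + dq ≤ q := not_lt.1 fun hlt => not_isBestResponse_linear_of_lt hdq hlt p hpq
  by_contra hne
  obtain ⟨hp, hpq'⟩ := hpq.linear_mem_Ioo hdq (lt_of_le_of_ne hq (Ne.symm hne))
  exact hpq'.not_gt (hqp.linear_mem_Ioo hdq hp).2

end Linear

lemma hasDerivAt_div_const_add_abs {d : ℝ} (hd : d ≠ 0) :
    HasDerivAt (fun s : ℝ => s / (d + |s|)) d⁻¹ 0 := by
  rw [hasDerivAt_iff_tendsto_slope]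
  have hslope : slope (fun s : ℝ => s / (d + |s|)) 0 =ᶠ[𝓝[≠] 0] fun s => (d + |s|)⁻¹ := by
    filter_upwards [self_mem_nhdsWithin] with s (hs : s ≠ 0)
    rw [slope_def_field, sub_zero, zero_div, sub_zero, div_div_cancel_left' hs]
  have hcont : ContinuousAt (fun s : ℝ => (d + |s|)⁻¹) 0 :=
    (continuousAt_const.add continuous_abs.continuousAt).inv₀ (by simpa using hd)
  simpa using (hcont.tendsto.mono_left nhdsWithin_le_nhds).congr' hslope.symm

section FirstOrderCondition

variable {G : ℝ → ℝ} {c dq p : ℝ}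

lemma hasDerivAt_profit_self (hG : DifferentiableAt ℝ G 0) (hdq : dq ≠ 0) :
    HasDerivAt (fun t => profit G c dq t p) (G 0 - (p - c) * deriv G 0 / dq) p := by
  have hinner : HasDerivAt (fun t => (p - t) / (dq + |p - t|)) (dq⁻¹ * -1) p := by
    have h := hasDerivAt_div_const_add_abs hdq
    rw [← sub_self p] at h
    exact h.comp p ((hasDerivAt_id' p).const_sub p)
  have hG' : HasDerivAt (fun t => G ((p - t) / (dq + |p - t|))) (deriv G 0 * (dq⁻¹ * -1)) p := by
    have h : HasDerivAt G (deriv G 0) ((p - p) / (dq + |p - p|)) := by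
      simpa using hG.hasDerivAt
    exact h.comp p hinner
  refine (((hasDerivAt_id' p).sub_const c).mul hG').congr_deriv ?_
  rw [sub_self, abs_zero, add_zero, zero_div]
  ring

lemma IsBestResponse.apply_zero_eq_of_self (hG : DifferentiableAt ℝ G 0) (hdq : dq ≠ 0)
    (h : IsBestResponse G c dq p p) : G 0 = (p - c) * deriv G 0 / dq := by
  have hmax : IsLocalMax (fun t => profit G c dq t p) p := Eventually.of_forall h
  linarith [hmax.hasDerivAt_eq_zero (hasDerivAt_profit_self hG hdq)]

end FirstOrderCondition

/-- Proposition 3 — (1) with linear G the unique pure-strategy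
equilibrium has p_a = p_b = c + Δq; (2) for general G differentiable at 0, any
symmetric pure-strategy equilibrium has p_a = p_b = c + Δq/(2G'(0)). -/
theorem stmt_15 (c dq : ℝ) (hdq : 0 < dq) :
    (IsNE (fun r => 1/2 + r/2) c dq (c + dq) (c + dq) ∧
      ∀ pa pb, IsNE (fun r => 1/2 + r/2) c dq pa pb →
        pa = c + dq ∧ pb = c + dq) ∧
    (∀ G : ℝ → ℝ, StrictMonoOn G (Set.Icc (-1) 1) →
      (∀ r ∈ Set.Icc (-1:ℝ) 1, G r ∈ Set.Icc (0:ℝ) 1 ∧ G r = 1 - G (-r)) →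
      DifferentiableAt ℝ G 0 → 0 < deriv G 0 →
      ∀ p, IsNE G c dq p p → p = c + dq / (2 * deriv G 0)) := by
  refine ⟨⟨⟨isBestResponse_linear_self hdq, isBestResponse_linear_self hdq⟩,
    fun pa pb h => ⟨IsBestResponse.linear_eq hdq h.2 h.1, IsBestResponse.linear_eq hdq h.1 h.2⟩⟩, ?_⟩
  intro G _ hsym hG _ p hNE
  have hhalf : G 0 = 1 / 2 := by
    have h := (hsym 0 (by norm_num)).2
    rw [neg_zero] at h
    linarith
  have hfoc := IsBestResponse.apply_zero_eq_of_self hG hdq.ne' hNE.1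
  rw [hhalf] at hfoc
  field_simp at hfoc ⊢
  linarith
end

section
/- Define φ : (0,∞) → ℝ by φ(λ) = (1 + λ)·( 3√(λ² + (8/9)λ) − λ ) / ( 3√(λ² + (8/9)λ) + λ ). Then φ is strictly decreasing on (0, 1/9] and strictly increasing on [1/9, ∞); φ(1/9) = 8/9, φ(1/2) = 1, and φ(λ) → 1 as λ → 0⁺. Consequently φ(λ) < 1 for all λ ∈ (0, 1/2) and φ(λ) > 1 for all λ > 1/2. -/
/-- The low-cost firm's normalized equilibrium profit as a function of λ = Δq/Δc. -/
noncomputable def phiFun (l : ℝ) : ℝ :=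
  (1 + l) * (3 * Real.sqrt (l ^ 2 + (8/9) * l) - l) /
    (3 * Real.sqrt (l ^ 2 + (8/9) * l) + l)

lemma s_sq {l : ℝ} (hl : 0 ≤ l) : (Real.sqrt (l ^ 2 + (8/9) * l)) ^ 2 = l ^ 2 + (8/9) * l :=
  Real.sq_sqrt (by nlinarith)

lemma phi_eq {l : ℝ} (hl : 0 < l) :
    phiFun l = (5 * l + 4 - 3 * Real.sqrt (l ^ 2 + (8/9) * l)) / 4 := by
  have hs0 : 0 ≤ Real.sqrt (l ^ 2 + (8/9) * l) := Real.sqrt_nonneg _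
  have hs2 := s_sq hl.le
  unfold phiFun
  rw [div_eq_div_iff (by positivity) (by norm_num : (4:ℝ) ≠ 0)]
  linear_combination (9:ℝ) * hs2

-- 5*s ≥ 3*l + 4/3 when l ≥ 1/9 (strict when >)
lemma bound_ge {l : ℝ} (hl : 1/9 ≤ l) :
    3 * l + 4/3 ≤ 5 * Real.sqrt (l ^ 2 + (8/9) * l) := by
  have h0 : (0:ℝ) ≤ l := by linarith
  have hs0 : 0 ≤ Real.sqrt (l ^ 2 + (8/9) * l) := Real.sqrt_nonneg _
  have hs2 := s_sq h0
  nlinarith [sq_nonneg (5 * Real.sqrt (l ^ 2 + (8/9) * l) - (3 * l + 4/3))]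

lemma bound_gt {l : ℝ} (hl : 1/9 < l) :
    3 * l + 4/3 < 5 * Real.sqrt (l ^ 2 + (8/9) * l) := by
  have h0 : (0:ℝ) ≤ l := by linarith
  have hs0 : 0 ≤ Real.sqrt (l ^ 2 + (8/9) * l) := Real.sqrt_nonneg _
  have hs2 := s_sq h0
  nlinarith [sq_nonneg (5 * Real.sqrt (l ^ 2 + (8/9) * l) - (3 * l + 4/3))]

lemma bound_le {l : ℝ} (h0 : 0 ≤ l) (hl : l ≤ 1/9) :
    5 * Real.sqrt (l ^ 2 + (8/9) * l) ≤ 3 * l + 4/3 := by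
  have hs0 : 0 ≤ Real.sqrt (l ^ 2 + (8/9) * l) := Real.sqrt_nonneg _
  have hs2 := s_sq h0
  nlinarith [sq_nonneg (5 * Real.sqrt (l ^ 2 + (8/9) * l) + (3 * l + 4/3))]

lemma bound_lt {l : ℝ} (h0 : 0 ≤ l) (hl : l < 1/9) :
    5 * Real.sqrt (l ^ 2 + (8/9) * l) < 3 * l + 4/3 := by
  have hs0 : 0 ≤ Real.sqrt (l ^ 2 + (8/9) * l) := Real.sqrt_nonneg _
  have hs2 := s_sq h0
  nlinarith [sq_nonneg (5 * Real.sqrt (l ^ 2 + (8/9) * l) + (3 * l + 4/3))]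

/-- properties of φ underlying the imitation-vs-obfuscation threshold
of Proposition 4 — φ is strictly decreasing on (0, 1/9], strictly increasing on
[1/9, ∞), φ(1/9) = 8/9, φ(1/2) = 1, φ(λ) → 1 as λ → 0⁺; hence φ < 1 on (0, 1/2)
and φ > 1 on (1/2, ∞). -/
theorem stmt_18 :
    StrictAntiOn phiFun (Set.Ioc 0 (1/9)) ∧
    StrictMonoOn phiFun (Set.Ici (1/9)) ∧
    phiFun (1/9) = 8/9 ∧
    phiFun (1/2) = 1 ∧
    Filter.Tendsto phiFun (nhdsWithin 0 (Set.Ioi 0)) (nhds 1) ∧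
    (∀ l ∈ Set.Ioo (0:ℝ) (1/2), phiFun l < 1) ∧
    (∀ l : ℝ, 1/2 < l → 1 < phiFun l) := by
  refine ⟨?_, ?_, ?_, ?_, ?_, ?_, ?_⟩
  · -- StrictAntiOn on Ioc 0 (1/9)
    intro a ha b hb hab
    obtain ⟨ha0, ha1⟩ := ha
    obtain ⟨hb0, hb1⟩ := hb
    rw [phi_eq ha0, phi_eq hb0]
    set sa := Real.sqrt (a ^ 2 + (8/9) * a) with hsa
    set sb := Real.sqrt (b ^ 2 + (8/9) * b) with hsb
    have hsa2 := s_sq ha0.le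
    have hsb2 := s_sq hb0.le
    have hsbpos : 0 < sb := Real.sqrt_pos.mpr (by nlinarith)
    have hsa0 : 0 ≤ sa := Real.sqrt_nonneg _
    have hA : 5 * sa < 3 * a + 4/3 := bound_lt ha0.le (lt_of_lt_of_le hab hb1)
    have hB : 5 * sb ≤ 3 * b + 4/3 := bound_le hb0.le hb1
    have key : 5 * (b - a) < 3 * (sb - sa) := by
      have hsum : 0 < sa + sb := by linarith
      nlinarith [mul_pos (sub_pos.mpr hab) hsum]
    linarith
  · -- StrictMonoOn on Ici (1/9)
    intro a ha b hb hab
    simp only [Set.mem_Ici] at ha hb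
    have ha0 : (0:ℝ) < a := by linarith
    have hb0 : (0:ℝ) < b := by linarith
    rw [phi_eq ha0, phi_eq hb0]
    set sa := Real.sqrt (a ^ 2 + (8/9) * a) with hsa
    set sb := Real.sqrt (b ^ 2 + (8/9) * b) with hsb
    have hsa2 := s_sq ha0.le
    have hsb2 := s_sq hb0.le
    have hsa0 : 0 ≤ sa := Real.sqrt_nonneg _
    have hsb0 : 0 ≤ sb := Real.sqrt_nonneg _
    have hA : 3 * a + 4/3 ≤ 5 * sa := bound_ge ha
    have hB : 3 * b + 4/3 < 5 * sb := bound_gt (lt_of_le_of_lt ha hab)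
    have key : 3 * (sb - sa) < 5 * (b - a) := by
      have hsum : 0 < sa + sb := by nlinarith
      nlinarith [mul_pos (sub_pos.mpr hab) hsum]
    linarith
  · -- phiFun (1/9) = 8/9
    have h : Real.sqrt ((1/9:ℝ) ^ 2 + (8/9) * (1/9)) = 1/3 := by
      rw [show ((1/9:ℝ) ^ 2 + (8/9) * (1/9)) = (1/3)^2 by norm_num, Real.sqrt_sq (by norm_num)]
    rw [phi_eq (by norm_num), h]; norm_num
  · -- phiFun (1/2) = 1
    have h : Real.sqrt ((1/2:ℝ) ^ 2 + (8/9) * (1/2)) = 5/6 := by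
      rw [show ((1/2:ℝ) ^ 2 + (8/9) * (1/2)) = (5/6)^2 by norm_num, Real.sqrt_sq (by norm_num)]
    rw [phi_eq (by norm_num), h]; norm_num
  · -- limit at 0+
    have hg : Filter.Tendsto (fun l : ℝ => (5 * l + 4 - 3 * Real.sqrt (l ^ 2 + (8/9) * l)) / 4)
        (nhds 0) (nhds 1) := by
      have hcont : Continuous (fun l : ℝ => (5 * l + 4 - 3 * Real.sqrt (l ^ 2 + (8/9) * l)) / 4) := by
        continuity
      have := hcont.tendsto 0
      simpa using this
    refine Filter.Tendsto.congr' ?_ (hg.mono_left nhdsWithin_le_nhds)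
    filter_upwards [self_mem_nhdsWithin] with l hl
    exact (phi_eq hl).symm
  · -- phi < 1 on (0, 1/2)
    rintro l ⟨hl0, hl1⟩
    rw [phi_eq hl0]
    have hs0 : 0 ≤ Real.sqrt (l ^ 2 + (8/9) * l) := Real.sqrt_nonneg _
    have hs2 := s_sq hl0.le
    have : 5 * l < 3 * Real.sqrt (l ^ 2 + (8/9) * l) := by
      nlinarith [sq_nonneg (3 * Real.sqrt (l ^ 2 + (8/9) * l) + 5 * l)]
    linarith
  · -- phi > 1 on (1/2, ∞)
    intro l hl
    have hl0 : (0:ℝ) < l := by linarith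
    rw [phi_eq hl0]
    have hs0 : 0 ≤ Real.sqrt (l ^ 2 + (8/9) * l) := Real.sqrt_nonneg _
    have hs2 := s_sq hl0.le
    have : 3 * Real.sqrt (l ^ 2 + (8/9) * l) < 5 * l := by
      nlinarith [sq_nonneg (3 * Real.sqrt (l ^ 2 + (8/9) * l) + 5 * l)]
    linarith
end

section
/- Let c < p < p_s be real numbers. Then the function Δq ↦ (p − c)·[ (p_s − p)/(Δq + p_s − p) + Δq·(p_s − p)/(2·(Δq + p_s − p)²) ] is strictly decreasing on (0, ∞). -/
/-- in the three-firm pricing game, firm b's profit at price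
p ∈ (c, p_s) is strictly decreasing in the quantity dissimilarity Δq. -/
theorem stmt_19 (c p ps : ℝ) (h1 : c < p) (h2 : p < ps) :
    StrictAntiOn (fun dq : ℝ =>
      (p - c) * ((ps - p) / (dq + ps - p) +
        dq * (ps - p) / (2 * (dq + ps - p) ^ 2)))
      (Set.Ioi 0) := by
  intro x hx y hy hxy
  simp only [Set.mem_Ioi] at hx hy
  have hA : 0 < ps - p := by linarith
  have hux : 0 < x + ps - p := by linarith
  have huy : 0 < y + ps - p := by linarith
  have hpc : 0 < p - c := by linarith
  apply mul_lt_mul_of_pos_left _ hpc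
  rw [div_add_div _ _ (ne_of_gt hux) (by positivity),
      div_add_div _ _ (ne_of_gt huy) (by positivity),
      div_lt_div_iff₀ (by positivity) (by positivity)]
  nlinarith [mul_pos (mul_pos (mul_pos hA hux) huy)
    (mul_pos (sub_pos.mpr hxy)
      (by positivity : (0:ℝ) < (x + ps - p) * (y + ps - p) + x * (y + ps - p) + y * (x + ps - p)))]
end
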